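/- arXiv:2304.09127 — 2 statements merged into one kernel-verified Lean document; each statement's English description precedes it below -/
import Mathlib

section
/- For every μ ∈ (1, e²) there exist a strictly increasing sequence (α_m) converging to θ_μ and a strictly decreasing sequence (β_m) converging to θ_μ such that φ_μ([α_m, β_m]) ⊆ (α_{m+1}, β_{m+1}) for all m ∈ ℕ; moreover α₁ can be chosen arbitrarily small and β₁ can be chosen greater than 1/e. -/
open Real Set Filter

noncomputable def phi (μ w : ℝ) : ℝ := μ * w * Real.exp (-(μ * w))
noncomputable def theta (μ : ℝ) : ℝ := Real.log μ / μ

lemma phi_eq {μ : ℝ} (hμ : 0 < μ) (w : ℝ) :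
    phi μ w = w * Real.exp (Real.log μ - μ * w) := by
  rw [phi, Real.exp_sub, Real.exp_log hμ, Real.exp_neg]
  field_simp

lemma mupos {μ : ℝ} (hμ : 1 < μ) : (0:ℝ) < μ := lt_trans one_pos hμ

lemma theta_pos {μ : ℝ} (hμ : 1 < μ) : 0 < theta μ :=
  div_pos (Real.log_pos hμ) (mupos hμ)

lemma mu_theta {μ : ℝ} (hμ : 1 < μ) : μ * theta μ = Real.log μ := by
  rw [theta]; field_simp

lemma phi_theta {μ : ℝ} (hμ : 1 < μ) : phi μ (theta μ) = theta μ := by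
  rw [phi_eq (mupos hμ), mu_theta hμ, sub_self, Real.exp_zero, mul_one]

lemma phi_pos {μ : ℝ} (hμ : 1 < μ) {w : ℝ} (hw : 0 < w) : 0 < phi μ w := by
  rw [phi_eq (mupos hμ)]; positivity

lemma phi_lt_below {μ : ℝ} (hμ : 1 < μ) {w : ℝ} (hw : 0 < w) (hw2 : w < theta μ) :
    w < phi μ w := by
  rw [phi_eq (mupos hμ)]
  have h1 : 0 < Real.log μ - μ * w := by nlinarith [mu_theta hμ, mupos hμ]
  nlinarith [Real.one_lt_exp_iff.mpr h1]

lemma phi_gt_above {μ : ℝ} (hμ : 1 < μ) {w : ℝ} (hw : theta μ < w) : phi μ w < w := by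
  have hw0 : 0 < w := lt_trans (theta_pos hμ) hw
  rw [phi_eq (mupos hμ)]
  have h1 : Real.log μ - μ * w < 0 := by nlinarith [mu_theta hμ, mupos hμ]
  nlinarith [Real.exp_lt_one_iff.mpr h1]

lemma phi_le_inv_e {μ : ℝ} (hμ : 1 < μ) {w : ℝ} (hw : 0 ≤ w) :
    phi μ w ≤ (Real.exp 1)⁻¹ := by
  rw [phi]
  have ht0 : 0 ≤ μ * w := by positivity
  have h1 : μ * w ≤ Real.exp (μ * w - 1) := by nlinarith [Real.add_one_le_exp (μ * w - 1)]
  have h2 : μ * w * Real.exp (-(μ * w)) ≤ Real.exp (μ * w - 1) * Real.exp (-(μ * w)) :=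
    mul_le_mul_of_nonneg_right h1 (Real.exp_pos _).le
  calc μ * w * Real.exp (-(μ * w)) ≤ Real.exp (μ * w - 1) * Real.exp (-(μ * w)) := h2
    _ = Real.exp (-1) := by rw [← Real.exp_add]; ring_nf
    _ = (Real.exp 1)⁻¹ := by rw [← Real.exp_neg]

lemma theta_le_inv_e {μ : ℝ} (hμ : 1 < μ) : theta μ ≤ (Real.exp 1)⁻¹ := by
  have := phi_le_inv_e hμ (le_of_lt (theta_pos hμ))
  rwa [phi_theta hμ] at this

-- p u := (2+u) * exp (-u) + u - 2 is monotone
lemma p_mono : Monotone (fun u : ℝ => (2 + u) * Real.exp (-u) + u - 2) := by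
  have hd : ∀ u : ℝ, HasDerivAt (fun u : ℝ => (2 + u) * Real.exp (-u) + u - 2)
      (1 - (1 + u) * Real.exp (-u)) u := by
    intro u
    have h1 : HasDerivAt (fun u : ℝ => Real.exp (-u)) (-Real.exp (-u)) u := by
      simpa [Function.comp_def] using (Real.hasDerivAt_exp (-u)).comp u (hasDerivAt_neg u)
    have h2 : HasDerivAt (fun u : ℝ => (2 + u)) 1 u := by
      simpa using (hasDerivAt_id u).const_add 2
    have h3 := h2.mul h1
    have h4 := (h3.add (hasDerivAt_id u)).sub_const 2
    refine h4.congr_deriv ?_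
    ring
  apply monotone_of_deriv_nonneg
  · exact fun u => (hd u).differentiableAt
  · intro u
    rw [(hd u).deriv]
    have : (1 + u) * Real.exp (-u) ≤ 1 := by
      have h := Real.add_one_le_exp u
      have := mul_le_mul_of_nonneg_right h (Real.exp_pos (-u)).le
      rwa [← Real.exp_add, add_neg_cancel, Real.exp_zero, add_comm u 1] at this
    linarith

lemma keyA_nonneg {u : ℝ} (hu : 0 ≤ u) : (2 - u) * Real.exp u ≤ 2 + u := by
  have h := p_mono hu
  simp only [neg_zero, Real.exp_zero] at h
  -- h : (2+0)*1 + 0 - 2 ≤ (2+u) * exp (-u) + u - 2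
  have h' : 2 - u ≤ (2 + u) * Real.exp (-u) := by linarith
  have := mul_le_mul_of_nonneg_right h' (Real.exp_pos u).le
  rwa [mul_assoc, ← Real.exp_add, neg_add_cancel, Real.exp_zero, mul_one] at this

lemma keyA_nonpos {u : ℝ} (hu : u ≤ 0) : 2 + u ≤ (2 - u) * Real.exp u := by
  have h := p_mono hu
  simp only [neg_zero, Real.exp_zero] at h
  have h' : (2 + u) * Real.exp (-u) ≤ 2 - u := by linarith
  have := mul_le_mul_of_nonneg_right h' (Real.exp_pos u).le
  rwa [mul_assoc, ← Real.exp_add, neg_add_cancel, Real.exp_zero, mul_one] at this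

lemma core1 {R t : ℝ} (hR : R < 2) (ht : 0 < t) : (R - t) * Real.exp t < R + t := by
  have hA := keyA_nonneg ht.le
  have hexp : t + 1 < Real.exp t := Real.add_one_lt_exp (ne_of_gt ht)
  have h1 : 0 < (2 - R) * (Real.exp t - (1 + t)) :=
    mul_pos (by linarith) (by linarith)
  nlinarith [Real.exp_pos t]

lemma core2 {R t : ℝ} (hR : R < 2) (ht : t < 0) : R + t < (R - t) * Real.exp t := by
  have hA := keyA_nonpos ht.le
  have hexp : Real.exp t < 1 := Real.exp_lt_one_iff.mpr ht
  have h1 : 0 < (2 - R) * (1 - Real.exp t) := mul_pos (by linarith) (by linarith)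
  nlinarith [Real.exp_pos t]

lemma logmu_lt_two {μ : ℝ} (hμ : 1 < μ) (hμ2 : μ < Real.exp 2) : Real.log μ < 2 := by
  have := Real.log_lt_log (lt_trans one_pos hμ) hμ2
  rwa [Real.log_exp] at this

lemma key_below {μ : ℝ} (hμ : 1 < μ) (hμ2 : μ < Real.exp 2) {w : ℝ} (hw : 0 < w)
    (hw2 : w < theta μ) : w + phi μ w < 2 * theta μ := by
  have hμ0 := mupos hμ
  set t := Real.log μ - μ * w with htdef
  have hwt : μ * w = Real.log μ - t := by rw [htdef]; ring
  have ht : 0 < t := by nlinarith [mu_theta hμ]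
  have hcore := core1 (logmu_lt_two hμ hμ2) ht
  rw [phi_eq hμ0, theta]
  rw [show (2:ℝ) * (Real.log μ / μ) = 2 * Real.log μ / μ by ring, lt_div_iff₀ hμ0]
  have h2 : μ * w * Real.exp t = (Real.log μ - t) * Real.exp t := by rw [hwt]
  nlinarith [Real.exp_pos t]

lemma key_above {μ : ℝ} (hμ : 1 < μ) (hμ2 : μ < Real.exp 2) {w : ℝ}
    (hw2 : theta μ < w) : 2 * theta μ < w + phi μ w := by
  have hμ0 := mupos hμ
  set t := Real.log μ - μ * w with htdef
  have hwt : μ * w = Real.log μ - t := by rw [htdef]; ring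
  have ht : t < 0 := by nlinarith [mu_theta hμ]
  have hcore := core2 (logmu_lt_two hμ hμ2) ht
  rw [phi_eq hμ0, theta]
  rw [show (2:ℝ) * (Real.log μ / μ) = 2 * Real.log μ / μ by ring, div_lt_iff₀ hμ0]
  have h2 : μ * w * Real.exp t = (Real.log μ - t) * Real.exp t := by rw [hwt]
  nlinarith [Real.exp_pos t]

lemma phi_continuous (μ : ℝ) : Continuous (phi μ) := by
  unfold phi; fun_prop

noncomputable def lowB (μ u v : ℝ) : ℝ := sInf (phi μ '' Set.Icc u v)
noncomputable def uppB (μ u v : ℝ) : ℝ := sSup (phi μ '' Set.Icc u v)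

lemma img_compact (μ u v : ℝ) : IsCompact (phi μ '' Set.Icc u v) :=
  isCompact_Icc.image (phi_continuous μ)

lemma lowB_le {μ u v w : ℝ} (hw : w ∈ Set.Icc u v) : lowB μ u v ≤ phi μ w :=
  csInf_le (img_compact μ u v).bddBelow ⟨w, hw, rfl⟩

lemma le_uppB {μ u v w : ℝ} (hw : w ∈ Set.Icc u v) : phi μ w ≤ uppB μ u v :=
  le_csSup (img_compact μ u v).bddAbove ⟨w, hw, rfl⟩

lemma lowB_mem {μ u v : ℝ} (huv : u ≤ v) :
    ∃ x ∈ Set.Icc u v, phi μ x = lowB μ u v := by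
  have h := (img_compact μ u v).sInf_mem
    (((Set.nonempty_Icc).mpr huv).image (phi μ))
  obtain ⟨x, hx, hfx⟩ := h
  exact ⟨x, hx, hfx⟩

lemma uppB_mem {μ u v : ℝ} (huv : u ≤ v) :
    ∃ x ∈ Set.Icc u v, phi μ x = uppB μ u v := by
  have h := (img_compact μ u v).sSup_mem
    (((Set.nonempty_Icc).mpr huv).image (phi μ))
  obtain ⟨x, hx, hfx⟩ := h
  exact ⟨x, hx, hfx⟩

lemma lowB_mono {μ u v u' v' : ℝ} (h1 : u ≤ u') (h2 : u' ≤ v') (h3 : v' ≤ v) :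
    lowB μ u v ≤ lowB μ u' v' :=
  csInf_le_csInf (img_compact μ u v).bddBelow
    (((Set.nonempty_Icc).mpr h2).image (phi μ))
    (Set.image_mono (Set.Icc_subset_Icc h1 h3))

lemma uppB_mono {μ u v u' v' : ℝ} (h1 : u ≤ u') (h2 : u' ≤ v') (h3 : v' ≤ v) :
    uppB μ u' v' ≤ uppB μ u v :=
  csSup_le_csSup (img_compact μ u v).bddAbove
    (((Set.nonempty_Icc).mpr h2).image (phi μ))
    (Set.image_mono (Set.Icc_subset_Icc h1 h3))

lemma lowB_le_theta {μ u v : ℝ} (hμ : 1 < μ) (hu : u ≤ theta μ) (hv : theta μ ≤ v) :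
    lowB μ u v ≤ theta μ := by
  have := lowB_le (μ := μ) (Set.mem_Icc.mpr ⟨hu, hv⟩)
  rwa [phi_theta hμ] at this

lemma theta_le_uppB {μ u v : ℝ} (hμ : 1 < μ) (hu : u ≤ theta μ) (hv : theta μ ≤ v) :
    theta μ ≤ uppB μ u v := by
  have := le_uppB (μ := μ) (Set.mem_Icc.mpr ⟨hu, hv⟩)
  rwa [phi_theta hμ] at this

noncomputable def aseq (μ : ℝ) (s : ℝ × ℝ) : ℕ → ℝ × ℝ
  | 0 => s
  | k+1 =>
    let u := (aseq μ s k).1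
    let v := (aseq μ s k).2
    (max ((u + lowB μ u v) / 2) (lowB μ u v - (2:ℝ)⁻¹ ^ k),
     min ((v + uppB μ u v) / 2) (uppB μ u v + (2:ℝ)⁻¹ ^ k))

noncomputable def qq (μ c : ℝ) : ℝ := min c (theta μ) / 2
noncomputable def bb : ℝ := (Real.exp 1)⁻¹ + 1
noncomputable def aa (μ c : ℝ) : ℝ := lowB μ (qq μ c) bb
noncomputable def st (μ c : ℝ) : ℝ × ℝ := (min (qq μ c) (aa μ c) / 2, bb)
noncomputable def al (μ c : ℝ) (n : ℕ) : ℝ := (aseq μ (st μ c) n).1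
noncomputable def be (μ c : ℝ) (n : ℕ) : ℝ := (aseq μ (st μ c) n).2

lemma al_zero (μ c : ℝ) : al μ c 0 = min (qq μ c) (aa μ c) / 2 := rfl
lemma be_zero (μ c : ℝ) : be μ c 0 = bb := rfl
lemma al_succ (μ c : ℝ) (n : ℕ) :
    al μ c (n+1) = max ((al μ c n + lowB μ (al μ c n) (be μ c n)) / 2)
      (lowB μ (al μ c n) (be μ c n) - (2:ℝ)⁻¹ ^ n) := rfl
lemma be_succ (μ c : ℝ) (n : ℕ) :
    be μ c (n+1) = min ((be μ c n + uppB μ (al μ c n) (be μ c n)) / 2)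
      (uppB μ (al μ c n) (be μ c n) + (2:ℝ)⁻¹ ^ n) := rfl

section main
variable {μ c : ℝ}

lemma qq_pos (hμ : 1 < μ) (hc : 0 < c) : 0 < qq μ c := by
  have := lt_min hc (theta_pos hμ)
  rw [qq]; linarith

lemma qq_lt_theta (hμ : 1 < μ) (hc : 0 < c) : qq μ c < theta μ := by
  have h1 : min c (theta μ) ≤ theta μ := min_le_right _ _
  have := theta_pos hμ
  rw [qq]; linarith

lemma qq_lt_c (hμ : 1 < μ) (hc : 0 < c) : qq μ c < c := by
  have h1 : min c (theta μ) ≤ c := min_le_left _ _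
  rw [qq]; linarith

lemma theta_lt_bb (hμ : 1 < μ) : theta μ < bb := by
  have := theta_le_inv_e hμ
  rw [bb]; linarith

lemma qq_le_bb (hμ : 1 < μ) (hc : 0 < c) : qq μ c ≤ bb :=
  le_of_lt (lt_trans (qq_lt_theta hμ hc) (theta_lt_bb hμ))

lemma aa_pos (hμ : 1 < μ) (hc : 0 < c) : 0 < aa μ c := by
  obtain ⟨x, hx, hfx⟩ := lowB_mem (μ := μ) (qq_le_bb hμ hc)
  rw [aa, ← hfx]
  exact phi_pos hμ (lt_of_lt_of_le (qq_pos hμ hc) hx.1)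

lemma al0_pos (hμ : 1 < μ) (hc : 0 < c) : 0 < al μ c 0 := by
  rw [al_zero]
  have := lt_min (qq_pos hμ hc) (aa_pos hμ hc)
  linarith

lemma al0_lt_qq (hμ : 1 < μ) (hc : 0 < c) : al μ c 0 < qq μ c := by
  rw [al_zero]
  have h1 : min (qq μ c) (aa μ c) ≤ qq μ c := min_le_left _ _
  have := qq_pos hμ hc
  linarith

lemma al0_lt_theta (hμ : 1 < μ) (hc : 0 < c) : al μ c 0 < theta μ :=
  lt_trans (al0_lt_qq hμ hc) (qq_lt_theta hμ hc)

lemma base_low (hμ : 1 < μ) (hc : 0 < c) : al μ c 0 < lowB μ (al μ c 0) (be μ c 0) := by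
  have h0 := al0_pos hμ hc
  have hle : al μ c 0 ≤ be μ c 0 := by
    rw [be_zero]
    exact le_of_lt (lt_trans (al0_lt_theta hμ hc) (theta_lt_bb hμ))
  obtain ⟨x, hx, hfx⟩ := lowB_mem (μ := μ) hle
  rw [← hfx]
  rcases le_or_gt x (qq μ c) with h | h
  · have hxθ : x < theta μ := lt_of_le_of_lt h (qq_lt_theta hμ hc)
    have hx0 : 0 < x := lt_of_lt_of_le h0 hx.1
    exact lt_of_le_of_lt hx.1 (phi_lt_below hμ hx0 hxθ)
  · have hmem : x ∈ Set.Icc (qq μ c) bb := ⟨le_of_lt h, by rw [← be_zero (μ := μ) (c := c)]; exact hx.2⟩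
    have haux : aa μ c ≤ phi μ x := lowB_le hmem
    have h2 : al μ c 0 < aa μ c := by
      rw [al_zero]
      have h1 : min (qq μ c) (aa μ c) ≤ aa μ c := min_le_right _ _
      have := aa_pos hμ hc
      linarith
    linarith

lemma base_upp (hμ : 1 < μ) (hc : 0 < c) : uppB μ (al μ c 0) (be μ c 0) < be μ c 0 := by
  have hle : al μ c 0 ≤ be μ c 0 := by
    rw [be_zero]
    exact le_of_lt (lt_trans (al0_lt_theta hμ hc) (theta_lt_bb hμ))
  obtain ⟨y, hy, hfy⟩ := uppB_mem (μ := μ) hle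
  rw [← hfy, be_zero, bb]
  have hy0 : 0 ≤ y := le_trans (al0_pos hμ hc).le hy.1
  have := phi_le_inv_e hμ hy0
  linarith

lemma inv_all (hμ : 1 < μ) (hc : 0 < c) : ∀ n,
    0 < al μ c n ∧ al μ c n < theta μ ∧ theta μ < be μ c n ∧
      al μ c n < lowB μ (al μ c n) (be μ c n) ∧
      uppB μ (al μ c n) (be μ c n) < be μ c n := by
  intro n
  induction n with
  | zero =>
    exact ⟨al0_pos hμ hc, al0_lt_theta hμ hc,
      by rw [be_zero]; exact theta_lt_bb hμ, base_low hμ hc, base_upp hμ hc⟩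
  | succ n ih =>
    obtain ⟨h0, h1, h2, h3, h4⟩ := ih
    have hpow : (0:ℝ) < (2:ℝ)⁻¹ ^ n := by positivity
    have hLθ : lowB μ (al μ c n) (be μ c n) ≤ theta μ := lowB_le_theta hμ h1.le h2.le
    have hθU : theta μ ≤ uppB μ (al μ c n) (be μ c n) := theta_le_uppB hμ h1.le h2.le
    have hu' : al μ c (n+1) < lowB μ (al μ c n) (be μ c n) := by
      rw [al_succ]
      exact max_lt (by linarith) (by linarith)
    have huu' : al μ c n < al μ c (n+1) := by
      rw [al_succ]
      exact lt_of_lt_of_le (by linarith) (le_max_left _ _)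
    have hv' : uppB μ (al μ c n) (be μ c n) < be μ c (n+1) := by
      rw [be_succ]
      exact lt_min (by linarith) (by linarith)
    have hvv' : be μ c (n+1) < be μ c n := by
      rw [be_succ]
      exact lt_of_le_of_lt (min_le_left _ _) (by linarith)
    have hu'θ : al μ c (n+1) < theta μ := lt_of_lt_of_le hu' hLθ
    have hθv' : theta μ < be μ c (n+1) := lt_of_le_of_lt hθU hv'
    refine ⟨lt_trans h0 huu', hu'θ, hθv', ?_, ?_⟩
    · exact lt_of_lt_of_le hu'
        (lowB_mono huu'.le (lt_trans hu'θ hθv').le hvv'.le)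
    · exact lt_of_le_of_lt
        (uppB_mono huu'.le (lt_trans hu'θ hθv').le hvv'.le) hv'

lemma step_facts (hμ : 1 < μ) (hc : 0 < c) (n : ℕ) :
    al μ c n < al μ c (n+1) ∧
      al μ c (n+1) < lowB μ (al μ c n) (be μ c n) ∧
      uppB μ (al μ c n) (be μ c n) < be μ c (n+1) ∧
      be μ c (n+1) < be μ c n ∧
      lowB μ (al μ c n) (be μ c n) - (2:ℝ)⁻¹ ^ n ≤ al μ c (n+1) ∧
      be μ c (n+1) ≤ uppB μ (al μ c n) (be μ c n) + (2:ℝ)⁻¹ ^ n := by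
  obtain ⟨h0, h1, h2, h3, h4⟩ := inv_all hμ hc n
  have hpow : (0:ℝ) < (2:ℝ)⁻¹ ^ n := by positivity
  have hLθ : lowB μ (al μ c n) (be μ c n) ≤ theta μ := lowB_le_theta hμ h1.le h2.le
  have hθU : theta μ ≤ uppB μ (al μ c n) (be μ c n) := theta_le_uppB hμ h1.le h2.le
  refine ⟨?_, ?_, ?_, ?_, ?_, ?_⟩
  · rw [al_succ]; exact lt_of_lt_of_le (by linarith) (le_max_left _ _)
  · rw [al_succ]; exact max_lt (by linarith) (by linarith)
  · rw [be_succ]; exact lt_min (by linarith) (by linarith)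
  · rw [be_succ]; exact lt_of_le_of_lt (min_le_left _ _) (by linarith)
  · rw [al_succ]; exact le_max_right _ _
  · rw [be_succ]; exact min_le_right _ _

lemma limits (hμ : 1 < μ) (hμ2 : μ < Real.exp 2) (hc : 0 < c) :
    (⨆ n, al μ c n) = theta μ ∧ (⨅ n, be μ c n) = theta μ := by
  have hmono : StrictMono (al μ c) :=
    strictMono_nat_of_lt_succ fun n => (step_facts hμ hc n).1
  have hanti : StrictAnti (be μ c) :=
    strictAnti_nat_of_succ_lt fun n => (step_facts hμ hc n).2.2.2.1
  have hbddα : BddAbove (Set.range (al μ c)) := by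
    refine ⟨theta μ, ?_⟩
    rintro y ⟨n, rfl⟩
    exact (inv_all hμ hc n).2.1.le
  have hbddβ : BddBelow (Set.range (be μ c)) := by
    refine ⟨theta μ, ?_⟩
    rintro y ⟨n, rfl⟩
    exact (inv_all hμ hc n).2.2.1.le
  set A := ⨆ n, al μ c n with hAdef
  set B := ⨅ n, be μ c n with hBdef
  have hαA : ∀ n, al μ c n ≤ A := fun n => le_ciSup hbddα n
  have hBβ : ∀ n, B ≤ be μ c n := fun n => ciInf_le hbddβ n
  have hAθ : A ≤ theta μ := ciSup_le fun n => (inv_all hμ hc n).2.1.le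
  have hθB : theta μ ≤ B := le_ciInf fun n => (inv_all hμ hc n).2.2.1.le
  have hA0 : 0 < A := lt_of_lt_of_le (al0_pos hμ hc) (hαA 0)
  have hle : ∀ n, al μ c n ≤ be μ c n := fun n =>
    le_of_lt (lt_trans (inv_all hμ hc n).2.1 (inv_all hμ hc n).2.2.1)
  have hinvar : ∀ w ∈ Set.Icc A B, A ≤ phi μ w ∧ phi μ w ≤ B := by
    intro w hw
    have hwn : ∀ n, w ∈ Set.Icc (al μ c n) (be μ c n) := fun n =>
      ⟨le_trans (hαA n) hw.1, le_trans hw.2 (hBβ n)⟩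
    constructor
    · exact ciSup_le fun m => le_trans (inv_all hμ hc m).2.2.2.1.le (lowB_le (hwn m))
    · exact le_ciInf fun m => le_trans (le_uppB (hwn m)) (inv_all hμ hc m).2.2.2.2.le
  have hpowle : ∀ m n : ℕ, m ≤ n → ((2:ℝ)⁻¹) ^ n ≤ ((2:ℝ)⁻¹) ^ m := fun m n h =>
    pow_le_pow_of_le_one (by norm_num) (by norm_num) h
  have hhalf : Filter.Tendsto (fun j : ℕ => ((2:ℝ)⁻¹) ^ j) Filter.atTop (nhds 0) :=
    tendsto_pow_atTop_nhds_zero_of_lt_one (by norm_num) (by norm_num)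
  -- min side
  have hxmin : ∃ ξ ∈ Set.Icc A B, phi μ ξ = A := by
    choose x hx hfx using fun n => lowB_mem (μ := μ) (hle n)
    have hx0 : ∀ n, x n ∈ Set.Icc (al μ c 0) (be μ c 0) := fun n =>
      ⟨le_trans (hmono.monotone (Nat.zero_le n)) (hx n).1,
       le_trans (hx n).2 (hanti.antitone (Nat.zero_le n))⟩
    obtain ⟨ξ, hξmem, k, hk, hkt⟩ := (isCompact_Icc).tendsto_subseq hx0
    have hAξ : A ≤ ξ := ciSup_le fun m => ge_of_tendsto hkt
      (Filter.eventually_atTop.mpr ⟨m, fun j hj =>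
        le_trans (hmono.monotone (le_trans hj (hk.le_apply))) (hx (k j)).1⟩)
    have hξB : ξ ≤ B := le_ciInf fun m => le_of_tendsto hkt
      (Filter.eventually_atTop.mpr ⟨m, fun j hj =>
        le_trans (hx (k j)).2 (hanti.antitone (le_trans hj (hk.le_apply)))⟩)
    have hlowle : ∀ n, lowB μ (al μ c n) (be μ c n) ≤ A + (2:ℝ)⁻¹ ^ n := by
      intro n
      have h5 := (step_facts hμ hc n).2.2.2.2.1
      have := hαA (n+1)
      linarith
    have htphi : Filter.Tendsto (fun j => phi μ (x (k j))) Filter.atTop (nhds (phi μ ξ)) :=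
      ((phi_continuous μ).tendsto ξ).comp hkt
    have ht2 : Filter.Tendsto (fun j : ℕ => A + ((2:ℝ)⁻¹) ^ j) Filter.atTop (nhds A) := by
      have := Filter.Tendsto.add (tendsto_const_nhds (x := A) (f := Filter.atTop (α := ℕ))) hhalf
      simpa using this
    have hbound : ∀ j, phi μ (x (k j)) ≤ A + ((2:ℝ)⁻¹) ^ j := by
      intro j
      rw [hfx (k j)]
      exact le_trans (hlowle (k j)) (by have := hpowle j (k j) hk.le_apply; linarith)
    have hphile : phi μ ξ ≤ A := le_of_tendsto_of_tendsto' htphi ht2 hbound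
    exact ⟨ξ, ⟨hAξ, hξB⟩, le_antisymm hphile (hinvar ξ ⟨hAξ, hξB⟩).1⟩
  -- max side
  have hxmax : ∃ η ∈ Set.Icc A B, phi μ η = B := by
    choose y hy hfy using fun n => uppB_mem (μ := μ) (hle n)
    have hy0 : ∀ n, y n ∈ Set.Icc (al μ c 0) (be μ c 0) := fun n =>
      ⟨le_trans (hmono.monotone (Nat.zero_le n)) (hy n).1,
       le_trans (hy n).2 (hanti.antitone (Nat.zero_le n))⟩
    obtain ⟨η, hηmem, k, hk, hkt⟩ := (isCompact_Icc).tendsto_subseq hy0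
    have hAη : A ≤ η := ciSup_le fun m => ge_of_tendsto hkt
      (Filter.eventually_atTop.mpr ⟨m, fun j hj =>
        le_trans (hmono.monotone (le_trans hj (hk.le_apply))) (hy (k j)).1⟩)
    have hηB : η ≤ B := le_ciInf fun m => le_of_tendsto hkt
      (Filter.eventually_atTop.mpr ⟨m, fun j hj =>
        le_trans (hy (k j)).2 (hanti.antitone (le_trans hj (hk.le_apply)))⟩)
    have huppge : ∀ n, B - (2:ℝ)⁻¹ ^ n ≤ uppB μ (al μ c n) (be μ c n) := by
      intro n
      have h5 := (step_facts hμ hc n).2.2.2.2.2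
      have := hBβ (n+1)
      linarith
    have htphi : Filter.Tendsto (fun j => phi μ (y (k j))) Filter.atTop (nhds (phi μ η)) :=
      ((phi_continuous μ).tendsto η).comp hkt
    have ht2 : Filter.Tendsto (fun j : ℕ => B - ((2:ℝ)⁻¹) ^ j) Filter.atTop (nhds B) := by
      have := Filter.Tendsto.sub (tendsto_const_nhds (x := B) (f := Filter.atTop (α := ℕ))) hhalf
      simpa using this
    have hbound : ∀ j, B - ((2:ℝ)⁻¹) ^ j ≤ phi μ (y (k j)) := by
      intro j
      rw [hfy (k j)]
      exact le_trans (by have := hpowle j (k j) hk.le_apply; linarith) (huppge (k j))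
    have hphige : B ≤ phi μ η := le_of_tendsto_of_tendsto' ht2 htphi hbound
    exact ⟨η, ⟨hAη, hηB⟩, le_antisymm (hinvar η ⟨hAη, hηB⟩).2 hphige⟩
  obtain ⟨ξ, hξmem, hphiξ⟩ := hxmin
  obtain ⟨η, hηmem, hphiη⟩ := hxmax
  have hξθ : theta μ ≤ ξ := by
    by_contra h
    push_neg at h
    have hξ0 : 0 < ξ := lt_of_lt_of_le hA0 hξmem.1
    have := phi_lt_below hμ hξ0 h
    rw [hphiξ] at this
    exact absurd hξmem.1 (not_le.mpr this)
  have hηθ : η ≤ theta μ := by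
    by_contra h
    push_neg at h
    have := phi_gt_above hμ h
    rw [hphiη] at this
    exact absurd hηmem.2 (not_le.mpr this)
  rcases eq_or_lt_of_le hξθ with heq | hlt
  · have hA : A = theta μ := by rw [← hphiξ, ← heq, phi_theta hμ]
    have hη : η = theta μ := le_antisymm hηθ (by rw [← hA]; exact hηmem.1)
    have hB : B = theta μ := by rw [← hphiη, hη, phi_theta hμ]
    exact ⟨hA, hB⟩
  · rcases eq_or_lt_of_le hηθ with heq2 | hlt2
    · exfalso
      have hB : B = theta μ := by rw [← hphiη, heq2, phi_theta hμ]
      have : ξ ≤ theta μ := hB ▸ hξmem.2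
      exact absurd this (not_le.mpr hlt)
    · exfalso
      have hk1 := key_above hμ hμ2 hlt
      have hη0 : 0 < η := lt_of_lt_of_le hA0 hηmem.1
      have hk2 := key_below hμ hμ2 hη0 hlt2
      rw [hphiξ] at hk1
      rw [hphiη] at hk2
      linarith [hξmem.2, hηmem.1]

/-- For every `μ ∈ (1, e²)` there exist a strictly increasing sequence `α` and a strictly
decreasing sequence `β`, both converging to `θ_μ = ln(μ)/μ`, with
`φ_μ([α_m, β_m]) ⊆ (α_{m+1}, β_{m+1})` for all `m`; moreover the initial value `α 0` can be
chosen arbitrarily small (below any given `c > 0`) and `β 0` greater than `1/e`. -/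
theorem stmt4 (μ : ℝ) (hμ : 1 < μ) (hμ2 : μ < Real.exp 2) (c : ℝ) (hc : 0 < c) :
    ∃ α β : ℕ → ℝ, StrictMono α ∧ StrictAnti β ∧
      Filter.Tendsto α Filter.atTop (nhds (Real.log μ / μ)) ∧
      Filter.Tendsto β Filter.atTop (nhds (Real.log μ / μ)) ∧
      0 < α 0 ∧ α 0 < c ∧ (Real.exp 1)⁻¹ < β 0 ∧
      ∀ m : ℕ, ∀ w ∈ Set.Icc (α m) (β m),
        μ * w * Real.exp (-(μ * w)) ∈ Set.Ioo (α (m + 1)) (β (m + 1)) := by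
  have hmono : StrictMono (al μ c) :=
    strictMono_nat_of_lt_succ fun n => (step_facts hμ hc n).1
  have hanti : StrictAnti (be μ c) :=
    strictAnti_nat_of_succ_lt fun n => (step_facts hμ hc n).2.2.2.1
  have hbddα : BddAbove (Set.range (al μ c)) := by
    refine ⟨theta μ, ?_⟩
    rintro y ⟨n, rfl⟩
    exact (inv_all hμ hc n).2.1.le
  have hbddβ : BddBelow (Set.range (be μ c)) := by
    refine ⟨theta μ, ?_⟩
    rintro y ⟨n, rfl⟩
    exact (inv_all hμ hc n).2.2.1.le
  obtain ⟨hsup, hinf⟩ := limits hμ hμ2 hc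
  refine ⟨al μ c, be μ c, hmono, hanti, ?_, ?_, al0_pos hμ hc, ?_, ?_, ?_⟩
  · have h := tendsto_atTop_ciSup hmono.monotone hbddα
    rw [hsup] at h
    exact h
  · have h := tendsto_atTop_ciInf hanti.antitone hbddβ
    rw [hinf] at h
    exact h
  · exact lt_trans (al0_lt_qq hμ hc) (qq_lt_c hμ hc)
  · rw [be_zero, bb]; norm_num
  · intro m w hw
    have h1 := (step_facts hμ hc m).2.1
    have h2 := (step_facts hμ hc m).2.2.1
    exact ⟨lt_of_lt_of_le h1 (lowB_le hw), lt_of_le_of_lt (le_uppB hw) h2⟩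
end main
end

section
/- For u > 0 one has −1 − √(2u) − u < W_{−1}(−e^{−u−1}) < −1 − √(2u) − (2/3)u, where W_{−1} is the lower real branch of the Lambert W function (defined on [−1/e, 0) with values in (−∞, −1]). -/
/-!
Write `y = -e^s`. Then `y e^y = -e^{-u-1}` says `u = e^s - 1 - s`, and `y ≤ -1`, `u > 0` force
`s > 0`. In these coordinates the lower bound reads `s < √(2u)`, which is the Taylor bound
`e^s > 1 + s + s²/2`, and the upper bound reads `3√(2u) < e^s - 1 + 2s`, i.e.
`e^{2s} + (4s - 20) e^s + 4s² + 14s + 19 > 0`. The left side vanishes to fourth order at `0`;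
after dividing by `e^s` one differentiation reduces it to `e^{2s} + 4e^s > 4s² + 6s + 5`, which
again follows from the quadratic Taylor bound.
-/

open Real Set

lemma one_add_add_sq_div_two_lt_exp {s : ℝ} (hs : 0 < s) : 1 + s + s ^ 2 / 2 < exp s := by
  have h := sum_le_exp_of_nonneg hs.le 4
  simp only [Finset.sum_range_succ, Finset.sum_range_zero] at h
  norm_num [Nat.factorial] at h
  nlinarith [pow_pos hs 3]

lemma lt_sqrt_two_mul_exp_sub_one_sub {s : ℝ} (hs : 0 < s) : s < √(2 * (exp s - 1 - s)) := by
  rw [lt_sqrt hs.le]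
  linarith [one_add_add_sq_div_two_lt_exp hs]

lemma four_mul_sq_add_six_mul_add_five_lt_exp_sq_add_four_mul_exp {s : ℝ} (hs : 0 < s) :
    4 * s ^ 2 + 6 * s + 5 < exp s ^ 2 + 4 * exp s := by
  have h := one_add_add_sq_div_two_lt_exp hs
  have h_sq : (1 + s + s ^ 2 / 2) ^ 2 < exp s ^ 2 := by gcongr
  nlinarith [pow_pos hs 3, pow_pos hs 4]

lemma strictMonoOn_exp_add_mul_exp_neg :
    StrictMonoOn (fun s ↦ exp s + 4 * s - 20 + (4 * s ^ 2 + 14 * s + 19) * exp (-s)) (Ici 0) := by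
  have hderiv (s : ℝ) :
      HasDerivAt (fun s ↦ exp s + 4 * s - 20 + (4 * s ^ 2 + 14 * s + 19) * exp (-s))
        (exp s + 4 - (4 * s ^ 2 + 6 * s + 5) * exp (-s)) s := by
    have h_poly := (((hasDerivAt_pow 2 s).const_mul 4).add
      ((hasDerivAt_id s).const_mul 14)).add_const 19
    have h := (((hasDerivAt_exp s).add ((hasDerivAt_id s).const_mul 4)).sub_const 20).add
      (h_poly.mul (hasDerivAt_neg s).exp)
    refine h.congr_deriv ?_
    simp only [mul_one, Nat.cast_ofNat, Nat.add_one_sub_one, pow_one, id_eq, Pi.add_apply, mul_neg]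
    ring
  refine strictMonoOn_of_deriv_pos (convex_Ici 0)
    (fun s _ ↦ (hderiv s).continuousAt.continuousWithinAt) fun s hs ↦ ?_
  rw [interior_Ici] at hs
  rw [(hderiv s).deriv]
  have h := mul_pos (exp_pos (-s))
    (sub_pos.2 (four_mul_sq_add_six_mul_add_five_lt_exp_sq_add_four_mul_exp hs))
  have h_exp : exp s * exp (-s) = 1 := by rw [← exp_add, add_neg_cancel, exp_zero]
  linear_combination h + (exp s + 4) * h_exp

lemma sqrt_two_mul_exp_sub_one_sub_lt {s : ℝ} (hs : 0 < s) :
    √(2 * (exp s - 1 - s)) < (exp s - 1 + 2 * s) / 3 := by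
  have h_pos := strictMonoOn_exp_add_mul_exp_neg self_mem_Ici (mem_Ici.2 hs.le) hs
  norm_num at h_pos
  have h_exp : exp s * exp (-s) = 1 := by rw [← exp_add, add_neg_cancel, exp_zero]
  have h_key : 18 * (exp s - 1 - s) < (exp s - 1 + 2 * s) ^ 2 := by
    have := mul_pos (exp_pos s) h_pos
    linear_combination this + (4 * s ^ 2 + 14 * s + 19) * h_exp
  rw [sqrt_lt' (by linarith [add_one_lt_exp hs.ne'])]
  linarith

/-- For `u > 0`, `−1 − √(2u) − u < W_{−1}(−e^{−u−1}) < −1 − √(2u) − (2/3)u`, where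
`W_{−1}` is the lower real branch of the Lambert W function; here `y = W_{−1}(x)` is
characterised as the unique `y ≤ −1` with `y e^y = x`. -/
theorem stmt10 (u : ℝ) (hu : 0 < u) (y : ℝ) (hy : y ≤ -1)
    (hW : y * Real.exp y = -Real.exp (-u - 1)) :
    -1 - Real.sqrt (2 * u) - u < y ∧ y < -1 - Real.sqrt (2 * u) - (2 / 3) * u := by
  obtain ⟨s, rfl⟩ : ∃ s, y = -exp s := ⟨log (-y), by rw [exp_log (by linarith), neg_neg]⟩
  have hu_eq : u = exp s - 1 - s := by
    rw [neg_mul, neg_inj, ← exp_add] at hW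
    linarith [exp_injective hW]
  have hs : 0 < s := by
    refine lt_of_le_of_ne (one_le_exp_iff.1 (by linarith)) fun hs ↦ ?_
    simp [hu_eq, ← hs] at hu
  subst hu_eq
  constructor
  · linarith [lt_sqrt_two_mul_exp_sub_one_sub hs]
  · linarith [sqrt_two_mul_exp_sub_one_sub_lt hs]
end
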